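/- With the discrete Toda evolution x̄_j = x_j P_{j−1}/P_j, ȳ_j = y_j P_j/P_{j−1} (n=3, indices mod 3), the characteristic quantities are conserved: x̄₁ȳ₁+x̄₂ȳ₂+x̄₃ȳ₃ = x₁y₁+x₂y₂+x₃y₃, x̄₁x̄₂x̄₃+ȳ₁ȳ₂ȳ₃ = x₁x₂x₃+y₁y₂y₃, x̄₁x̄₂ȳ₁ȳ₂+x̄₂x̄₃ȳ₂ȳ₃+x̄₃x̄₁ȳ₃ȳ₁ = x₁x₂y₁y₂+x₂x₃y₂y₃+x₃x₁y₃y₁, and x̄₁+x̄₂+x̄₃+ȳ₁+ȳ₂+ȳ₃ = x₁+x₂+x₃+y₁+y₂+y₃. -/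

import Mathlib

noncomputable section

/-- The rational function field `ℂ(x₁,x₂,x₃,y₁,y₂,y₃)`. -/
abbrev K : Type := FractionRing (MvPolynomial (Fin 6) ℂ)

/-- The generators of `K`. -/
def X (i : Fin 6) : K := algebraMap (MvPolynomial (Fin 6) ℂ) K (MvPolynomial.X i)

def x1 : K := X 0
def x2 : K := X 1
def x3 : K := X 2
def y1 : K := X 3
def y2 : K := X 4
def y3 : K := X 5

/-- The discrete Toda denominators `P_j = Σ_{a=1}^{3}(Π_{k=1}^{a−1} y_{j+k})(Π_{k=a+1}^{3} x_{j+k})`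
(indices mod 3). -/
def P1 : K := x3 * x1 + y2 * x1 + y2 * y3
def P2 : K := x1 * x2 + y3 * x2 + y3 * y1
def P3 : K := x2 * x3 + y1 * x3 + y1 * y2

/-- `x̄_j = x_j P_{j−1}/P_j` (with `P₀ = P₃`). -/
def xb1 : K := x1 * P3 / P1
def xb2 : K := x2 * P1 / P2
def xb3 : K := x3 * P2 / P3

/-- `ȳ_j = y_j P_j/P_{j−1}`. -/
def yb1 : K := y1 * P1 / P3
def yb2 : K := y2 * P2 / P1
def yb3 : K := y3 * P3 / P2

/-!
The `P_j` telescope: `x̄_j ȳ_j = x_j y_j`, `x̄₁x̄₂x̄₃ = x₁x₂x₃` and `ȳ₁ȳ₂ȳ₃ = y₁y₂y₃`, which gives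
the first three identities. The last one is the sum over `j` of the local relations
`x̄_j + ȳ_{j+1} = x_{j+1} + y_j`, i.e. of the polynomial identities
`x_j P_{j−1} + y_{j+1} P_{j+1} = (x_{j+1} + y_j) P_j`.
-/

section Field

variable {F : Type*} [Field F]

theorem mul_div_mul_mul_div_swap (a b : F) {p q : F} (hp : p ≠ 0) (hq : q ≠ 0) :
    a * p / q * (b * q / p) = a * b := by
  field_simp

theorem mul_div_mul_mul_div_mul_mul_div_cycle (a b c : F) {p q r : F} (hp : p ≠ 0)
    (hq : q ≠ 0) (hr : r ≠ 0) : a * r / p * (b * p / q) * (c * q / r) = a * b * c := by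
  field_simp

theorem toda_local_relation (x₁ x₂ x₃ y₁ y₂ y₃ : F)
    (h : x₃ * x₁ + y₂ * x₁ + y₂ * y₃ ≠ 0) :
    x₁ * (x₂ * x₃ + y₁ * x₃ + y₁ * y₂) / (x₃ * x₁ + y₂ * x₁ + y₂ * y₃) +
      y₂ * (x₁ * x₂ + y₃ * x₂ + y₃ * y₁) / (x₃ * x₁ + y₂ * x₁ + y₂ * y₃) = x₂ + y₁ := by
  rw [← add_div, div_eq_iff h]
  ring

end Field

theorem algebraMap_fractionRing_ne_zero_of_eval_ne_zero {σ R : Type*} [CommRing R] [IsDomain R]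
    {p : MvPolynomial σ R} (v : σ → R) (h : MvPolynomial.eval v p ≠ 0) :
    algebraMap (MvPolynomial σ R) (FractionRing (MvPolynomial σ R)) p ≠ 0 := by
  rw [map_ne_zero_iff _ (IsFractionRing.injective _ _)]
  rintro rfl
  exact h (map_zero _)

theorem X_mul_add_X_mul_add_X_mul_ne_zero (a b c d : Fin 6) :
    X a * X b + X c * X b + X c * X d ≠ 0 := by
  simp only [X, ← map_mul, ← map_add]
  refine algebraMap_fractionRing_ne_zero_of_eval_ne_zero (fun _ => 1) ?_
  norm_num

theorem P1_ne_zero : P1 ≠ 0 := X_mul_add_X_mul_add_X_mul_ne_zero 2 0 4 5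
theorem P2_ne_zero : P2 ≠ 0 := X_mul_add_X_mul_add_X_mul_ne_zero 0 1 5 3
theorem P3_ne_zero : P3 ≠ 0 := X_mul_add_X_mul_add_X_mul_ne_zero 1 2 3 4

theorem xb1_mul_yb1 : xb1 * yb1 = x1 * y1 := mul_div_mul_mul_div_swap _ _ P3_ne_zero P1_ne_zero
theorem xb2_mul_yb2 : xb2 * yb2 = x2 * y2 := mul_div_mul_mul_div_swap _ _ P1_ne_zero P2_ne_zero
theorem xb3_mul_yb3 : xb3 * yb3 = x3 * y3 := mul_div_mul_mul_div_swap _ _ P2_ne_zero P3_ne_zero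

theorem xb1_mul_xb2_mul_xb3 : xb1 * xb2 * xb3 = x1 * x2 * x3 :=
  mul_div_mul_mul_div_mul_mul_div_cycle _ _ _ P1_ne_zero P2_ne_zero P3_ne_zero

theorem yb1_mul_yb2_mul_yb3 : yb1 * yb2 * yb3 = y1 * y2 * y3 := by
  calc yb1 * yb2 * yb3 = yb1 * yb3 * yb2 := by ring
    _ = y1 * y3 * y2 := mul_div_mul_mul_div_mul_mul_div_cycle _ _ _ P3_ne_zero P2_ne_zero P1_ne_zero
    _ = y1 * y2 * y3 := by ring

theorem xb1_add_yb2 : xb1 + yb2 = x2 + y1 := toda_local_relation x1 x2 x3 y1 y2 y3 P1_ne_zero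
theorem xb2_add_yb3 : xb2 + yb3 = x3 + y2 := toda_local_relation x2 x3 x1 y2 y3 y1 P2_ne_zero
theorem xb3_add_yb1 : xb3 + yb1 = x1 + y3 := toda_local_relation x3 x1 x2 y3 y1 y2 P3_ne_zero

/-- the coefficients of the characteristic polynomial of `A(x)A(y)`
are conserved by the discrete Toda evolution. -/
theorem stmt14 :
    xb1 * yb1 + xb2 * yb2 + xb3 * yb3 = x1 * y1 + x2 * y2 + x3 * y3 ∧
    xb1 * xb2 * xb3 + yb1 * yb2 * yb3 = x1 * x2 * x3 + y1 * y2 * y3 ∧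
    xb1 * xb2 * yb1 * yb2 + xb2 * xb3 * yb2 * yb3 + xb3 * xb1 * yb3 * yb1 =
      x1 * x2 * y1 * y2 + x2 * x3 * y2 * y3 + x3 * x1 * y3 * y1 ∧
    xb1 + xb2 + xb3 + yb1 + yb2 + yb3 = x1 + x2 + x3 + y1 + y2 + y3 := by
  refine ⟨by rw [xb1_mul_yb1, xb2_mul_yb2, xb3_mul_yb3],
    by rw [xb1_mul_xb2_mul_xb3, yb1_mul_yb2_mul_yb3], ?_, ?_⟩
  · calc xb1 * xb2 * yb1 * yb2 + xb2 * xb3 * yb2 * yb3 + xb3 * xb1 * yb3 * yb1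
          = (xb1 * yb1) * (xb2 * yb2) + (xb2 * yb2) * (xb3 * yb3) + (xb3 * yb3) * (xb1 * yb1) := by
            ring
      _ = x1 * x2 * y1 * y2 + x2 * x3 * y2 * y3 + x3 * x1 * y3 * y1 := by
            rw [xb1_mul_yb1, xb2_mul_yb2, xb3_mul_yb3]; ring
  · calc xb1 + xb2 + xb3 + yb1 + yb2 + yb3 = (xb1 + yb2) + (xb2 + yb3) + (xb3 + yb1) := by ring
      _ = x1 + x2 + x3 + y1 + y2 + y3 := by
            rw [xb1_add_yb2, xb2_add_yb3, xb3_add_yb1]; ring
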